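/- Let C be a right triangulated category satisfying Assumption 2.10, D ⊆ Z subcategories with D factor-through-epic and Z extension-closed, such that (Z,Z) is a D-mutation pair. If the restriction T|_Z : Z → TZ of the shift functor is full, then the right triangulated quotient category Z/D is a triangulated category, i.e. the induced shift σ on Z/D is an equivalence. -/

import Mathlib

open CategoryTheory Limits

attribute [local instance] CategoryTheory.Limits.hasBinaryBiproducts_of_finite_biproducts

universe v u

variable (C : Type u) [Category.{v} C]

/-- A sextuple `A ⟶ B ⟶ C ⟶ TA` in a category with an endofunctor `T`. -/
structure RightTriangle (T : C ⥤ C) where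
  obj₁ : C
  obj₂ : C
  obj₃ : C
  mor₁ : obj₁ ⟶ obj₂
  mor₂ : obj₂ ⟶ obj₃
  mor₃ : obj₃ ⟶ T.obj obj₁

variable {C}

/-- An isomorphism of sextuples. -/
def RightTriangle.Iso {T : C ⥤ C} (t t' : RightTriangle C T) : Prop :=
  ∃ (a : t.obj₁ ≅ t'.obj₁) (b : t.obj₂ ≅ t'.obj₂) (c : t.obj₃ ≅ t'.obj₃),
    t.mor₁ ≫ b.hom = a.hom ≫ t'.mor₁ ∧
    t.mor₂ ≫ c.hom = b.hom ≫ t'.mor₂ ∧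
    t.mor₃ ≫ T.map a.hom = c.hom ≫ t'.mor₃

open ZeroObject in
/-- A right triangulated category structure on an additive category `C`
with shift endofunctor `T`, following Assem–Beligiannis–Marmaridis:
axioms TR(0)-TR(5). -/
structure RightTriangulated [Preadditive C] [HasZeroObject C] [HasFiniteBiproducts C]
    (T : C ⥤ C) where
  shift_additive : T.Additive
  dist : Set (RightTriangle C T)
  /-- TR(0): closed under isomorphisms -/
  tr0 : ∀ t ∈ dist, ∀ t', RightTriangle.Iso t t' → t' ∈ dist
  /-- TR(1): `0 ⟶ A ⟶ A ⟶ 0` is a right triangle -/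
  tr1 : ∀ A : C, (⟨0, A, A, 0, 𝟙 A, 0⟩ : RightTriangle C T) ∈ dist
  /-- TR(2): every morphism extends to a right triangle -/
  tr2 : ∀ {A B : C} (f : A ⟶ B), ∃ (Z : C) (g : B ⟶ Z) (h : Z ⟶ T.obj A),
    (⟨A, B, Z, f, g, h⟩ : RightTriangle C T) ∈ dist
  /-- TR(3): rotation -/
  tr3 : ∀ t ∈ dist,
    (⟨t.obj₂, t.obj₃, T.obj t.obj₁, t.mor₂, t.mor₃, -T.map t.mor₁⟩ : RightTriangle C T) ∈ dist
  /-- TR(4): completion of commutative squares to morphisms of right triangles -/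
  tr4 : ∀ t ∈ dist, ∀ t' ∈ dist, ∀ (a : t.obj₁ ⟶ t'.obj₁) (b : t.obj₂ ⟶ t'.obj₂),
    t.mor₁ ≫ b = a ≫ t'.mor₁ →
    ∃ c : t.obj₃ ⟶ t'.obj₃,
      t.mor₂ ≫ c = b ≫ t'.mor₂ ∧ t.mor₃ ≫ T.map a = c ≫ t'.mor₃
  /-- TR(5): the octahedral axiom -/
  tr5 : ∀ {X Y Z U V W : C} (a : X ⟶ Y) (b : Y ⟶ Z) (c : Z ⟶ T.obj X)
    (d : Y ⟶ U) (e : U ⟶ V) (f : V ⟶ T.obj Y) (g : U ⟶ W) (h : W ⟶ T.obj X),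
    (⟨X, Y, Z, a, b, c⟩ : RightTriangle C T) ∈ dist →
    (⟨Y, U, V, d, e, f⟩ : RightTriangle C T) ∈ dist →
    (⟨X, U, W, a ≫ d, g, h⟩ : RightTriangle C T) ∈ dist →
    ∃ (l : Z ⟶ W) (i : W ⟶ V),
      b ≫ l = d ≫ g ∧ l ≫ h = c ∧ g ≫ i = e ∧ i ≫ f = h ≫ T.map a ∧
      (⟨Z, W, V, l, i, f ≫ T.map b⟩ : RightTriangle C T) ∈ dist

/-- Assumption 2.10: the rotation axiom can be reversed. -/
def Assumption210 [Preadditive C] [HasZeroObject C] [HasFiniteBiproducts C]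
    {T : C ⥤ C} (rt : RightTriangulated T) : Prop :=
  ∀ {A B Z : C} (f : A ⟶ B) (g : B ⟶ Z) (h : Z ⟶ T.obj A),
    (⟨B, Z, T.obj A, g, h, -T.map f⟩ : RightTriangle C T) ∈ rt.dist →
    (⟨A, B, Z, f, g, h⟩ : RightTriangle C T) ∈ rt.dist

/-- A morphism factors through an object of `S`. -/
def FactorsThru (S : Set C) {X Y : C} (f : X ⟶ Y) : Prop :=
  ∃ (D : C) (_ : D ∈ S) (u : X ⟶ D) (v : D ⟶ Y), u ≫ v = f

/-- `g : X ⟶ Y` is `S`-epic. -/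
def SEpic (S : Set C) {X Y : C} (g : X ⟶ Y) : Prop :=
  ∀ D ∈ S, ∀ u : D ⟶ Y, ∃ v : D ⟶ X, v ≫ g = u

/-- `f : X ⟶ Y` is `S`-monic. -/
def SMonic (S : Set C) {X Y : C} (f : X ⟶ Y) : Prop :=
  ∀ D ∈ S, ∀ u : X ⟶ D, ∃ v : Y ⟶ D, f ≫ v = u

/-- iterate of an endofunctor. -/
def iterFun (T : C ⥤ C) : ℕ → (C ⥤ C)
  | 0 => 𝟭 C
  | n + 1 => iterFun T n ⋙ T

/-- `S` is factor-through-epic: every `f ∈ [Tⁿ S](TX, TY)` with `n > 0` is of the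
form `T f'` for some `f' ∈ [Tⁿ⁻¹ S](X, Y)`. -/
def FactorThroughEpic (T : C ⥤ C) (S : Set C) : Prop :=
  ∀ (n : ℕ) (X Y : C) (f : T.obj X ⟶ T.obj Y),
    FactorsThru ((iterFun T (n + 1)).obj '' S) f →
    ∃ f' : X ⟶ Y, FactorsThru ((iterFun T n).obj '' S) f' ∧ T.map f' = f

/-- A subcategory (given by a set of objects) closed under isomorphisms,
finite direct sums and direct summands. -/
def IsSubcat [Preadditive C] [HasFiniteBiproducts C] (S : Set C) : Prop :=
  (∀ {X Y : C}, (X ≅ Y) → X ∈ S → Y ∈ S) ∧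
  (∀ {X Y : C}, X ∈ S → Y ∈ S → (X ⊞ Y) ∈ S) ∧
  (∀ {X Y : C} (s : Y ⟶ X) (r : X ⟶ Y), s ≫ r = 𝟙 Y → X ∈ S → Y ∈ S)

section Mutation

variable [Preadditive C] [HasZeroObject C] [HasFiniteBiproducts C]
  {T : C ⥤ C} (rt : RightTriangulated T)

/-- `μ(𝒵; 𝒟)`: objects `X` that lie in `𝒟` or are the left end of a right triangle
`X ⟶ D ⟶ Y ⟶ TX` with `Y ∈ 𝒵`, `D ∈ 𝒟`, the first map a left `𝒟`-approximation and
the second a right `𝒟`-approximation. -/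
def muSet (𝒵 𝒟 : Set C) : Set C :=
  {X | X ∈ 𝒟 ∨ ∃ (D Y : C) (f : X ⟶ D) (g : D ⟶ Y) (h : Y ⟶ T.obj X),
    (⟨X, D, Y, f, g, h⟩ : RightTriangle C T) ∈ rt.dist ∧
    D ∈ 𝒟 ∧ Y ∈ 𝒵 ∧ SMonic 𝒟 f ∧ SEpic 𝒟 g}

/-- `μ⁻¹(𝒳; 𝒟)`: objects `Y` that lie in `𝒟` or are the third term of a right triangle
`X ⟶ D ⟶ Y ⟶ TX` with `X ∈ 𝒳`, `D ∈ 𝒟`, the maps being left/right `𝒟`-approximations. -/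
def muInvSet (𝒳 𝒟 : Set C) : Set C :=
  {Y | Y ∈ 𝒟 ∨ ∃ (X D : C) (f : X ⟶ D) (g : D ⟶ Y) (h : Y ⟶ T.obj X),
    (⟨X, D, Y, f, g, h⟩ : RightTriangle C T) ∈ rt.dist ∧
    X ∈ 𝒳 ∧ D ∈ 𝒟 ∧ SMonic 𝒟 f ∧ SEpic 𝒟 g}

/-- `(𝒳, 𝒴)` is a `𝒟`-mutation pair. -/
def IsMutationPair (𝒳 𝒴 𝒟 : Set C) : Prop :=
  muInvSet rt 𝒳 𝒟 = 𝒴 ∧ muSet rt 𝒴 𝒟 = 𝒳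

/-- `𝒵` is extension-closed. -/
def ExtClosed (𝒵 : Set C) : Prop :=
  ∀ t ∈ rt.dist, t.obj₁ ∈ 𝒵 → t.obj₃ ∈ 𝒵 → t.obj₂ ∈ 𝒵

end Mutation

section Quotient

variable [Preadditive C] (𝒵 𝒟 : Set C)

/-- The ideal relation: two morphisms of the full subcategory on `𝒵` are identified
iff their difference factors through an object of `𝒟`. -/
def stableRel : HomRel (ObjectProperty.FullSubcategory (· ∈ 𝒵)) :=
  fun {X Y} f g =>
    FactorsThru 𝒟 ((f.hom : X.obj ⟶ Y.obj) - (g.hom : X.obj ⟶ Y.obj))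

/-- The quotient category `𝒵/𝒟`. -/
abbrev ZModD := CategoryTheory.Quotient (stableRel 𝒵 𝒟)

/-- The quotient functor `𝒵 ⟶ 𝒵/𝒟`. -/
abbrev zquot : ObjectProperty.FullSubcategory (· ∈ 𝒵) ⥤ ZModD 𝒵 𝒟 :=
  Quotient.functor (stableRel 𝒵 𝒟)

end Quotient

/-!
Let `M → D_M → σM → TM` be the fixed right triangles, `γ_M : σM → TM`. The key fact is that
a morphism `w` into `σM` factors through `𝒟` iff `w ≫ γ_M = 0`: one direction because
`D_M → σM` is a right `𝒟`-approximation, the other because `T w` factors through `T D_M`,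
and Assumption 2.10 (which makes `T` faithful) together with factor-through-epicness lets
this factorization descend along `T`. Consequently `σ` sends the class of `μ : M → N` to the
class of any `μ'` with `γ_M ≫ Tμ = μ' ≫ γ_N`. Faithfulness follows by the dual criterion for
morphisms out of `M`; fullness because every `ε : σM → σN` extends to some `TM → TN`, which is
`Tμ` by fullness of `T` on `𝒵`. Essential surjectivity uses `𝒵 = μ⁻¹(𝒵; 𝒟)`: each `M ∈ 𝒵` is
either in `𝒟` (so zero in `𝒵/𝒟`, as is `σM`) or the cone of a left `𝒟`-approximation
`N → D`, and comparing that triangle with `N → D_N → σN` gives `σN ≅ M` in `𝒵/𝒟`.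
-/

namespace RightTriangulated

variable {C : Type u} [Category.{v} C] [Preadditive C] [HasZeroObject C]
  [HasFiniteBiproducts C] {T : C ⥤ C} (rt : RightTriangulated T)

open ZeroObject

lemma mor₁_comp_mor₂ {t : RightTriangle C T} (ht : t ∈ rt.dist) : t.mor₁ ≫ t.mor₂ = 0 := by
  obtain ⟨c, hc, -⟩ := rt.tr4 _ (rt.tr3 _ (rt.tr1 t.obj₁)) t ht (𝟙 t.obj₁) t.mor₁ (by simp)
  simpa using hc.symm

lemma mor₂_comp_mor₃ {t : RightTriangle C T} (ht : t ∈ rt.dist) : t.mor₂ ≫ t.mor₃ = 0 :=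
  rt.mor₁_comp_mor₂ (rt.tr3 _ ht)

lemma exists_mor₂_comp_eq {t : RightTriangle C T} (ht : t ∈ rt.dist) {W : C}
    (u : t.obj₂ ⟶ W) (hu : t.mor₁ ≫ u = 0) : ∃ v : t.obj₃ ⟶ W, t.mor₂ ≫ v = u := by
  obtain ⟨v, hv, -⟩ := rt.tr4 t ht _ (rt.tr1 W) 0 u (by simpa using hu)
  exact ⟨v, by simpa using hv⟩

lemma mor₃_eq_zero_of_retraction {t : RightTriangle C T} (ht : t ∈ rt.dist)
    (r : t.obj₂ ⟶ t.obj₁) (hr : t.mor₁ ≫ r = 𝟙 t.obj₁) : t.mor₃ = 0 := by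
  have hzero : t.mor₃ ≫ T.map t.mor₁ = 0 := by
    simpa using rt.mor₂_comp_mor₃ (rt.tr3 _ ht)
  calc t.mor₃ = t.mor₃ ≫ T.map t.mor₁ ≫ T.map r := by
        rw [← T.map_comp, hr, T.map_id, Category.comp_id]
    _ = 0 := by rw [reassoc_of% hzero, zero_comp]

lemma eq_zero_of_map_eq_zero (h210 : Assumption210 rt) {W V : C} (δ : W ⟶ V)
    (hδ : T.map δ = 0) : δ = 0 := by
  have := rt.shift_additive
  obtain ⟨U, g, h, ht⟩ := rt.tr2 δ
  -- as `T δ = T 0`, Assumption 2.10 turns the rotation of `W → V → U` into `W --0--> V → U`,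
  -- in which `g` is a split monomorphism
  have hrot : (⟨V, U, T.obj W, g, h, -T.map (0 : W ⟶ V)⟩ : RightTriangle C T) ∈ rt.dist := by
    simpa [hδ] using rt.tr3 _ ht
  obtain ⟨r, hr⟩ := rt.exists_mor₂_comp_eq (h210 _ g h hrot) (𝟙 V) (by simp)
  have hδg : δ ≫ g = 0 := rt.mor₁_comp_mor₂ ht
  calc δ = δ ≫ g ≫ r := by rw [show g ≫ r = 𝟙 V from hr, Category.comp_id]
    _ = 0 := by rw [reassoc_of% hδg, zero_comp]

lemma factorsThru_of_factorsThru_map (h210 : Assumption210 rt) {𝒟 : Set C}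
    (hfte : FactorThroughEpic T 𝒟) {X Y : C} (f : X ⟶ Y)
    (hf : FactorsThru (T.obj '' 𝒟) (T.map f)) : FactorsThru 𝒟 f := by
  have := rt.shift_additive
  obtain ⟨f', ⟨D, ⟨D, hD, rfl⟩, u, v, huv⟩, hTf'⟩ := hfte 0 X Y (T.map f) hf
  obtain rfl : f' = f :=
    sub_eq_zero.mp (rt.eq_zero_of_map_eq_zero h210 _ (by rw [T.map_sub, hTf', sub_self]))
  exact ⟨D, hD, u, v, huv⟩

/-- Right triangles only provide weak cokernels, so `w` is factored through `mor₂` only after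
applying `T` (via the double rotation of the triangle) and the factorization is then descended. -/
lemma factorsThru_of_comp_mor₃_eq_zero (h210 : Assumption210 rt) {𝒟 : Set C}
    (hfte : FactorThroughEpic T 𝒟) {t : RightTriangle C T} (ht : t ∈ rt.dist)
    (h𝒟 : t.obj₂ ∈ 𝒟) {W : C} (w : W ⟶ t.obj₃) (hw : w ≫ t.mor₃ = 0) :
    FactorsThru 𝒟 w := by
  obtain ⟨c, -, hc⟩ := rt.tr4 _ (rt.tr3 _ (rt.tr3 _ (rt.tr1 W))) _ (rt.tr3 _ (rt.tr3 _ ht)) w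
    (0 : T.obj 0 ⟶ T.obj t.obj₁) (by simp [hw])
  have hTw : c ≫ T.map t.mor₂ = T.map w := by simpa using hc.symm
  exact rt.factorsThru_of_factorsThru_map h210 hfte w ⟨_, ⟨t.obj₂, h𝒟, rfl⟩, c, _, hTw⟩

lemma factorsThru_of_mor₃_comp_map_eq_zero (h210 : Assumption210 rt) {𝒟 : Set C}
    (hfte : FactorThroughEpic T 𝒟) {t : RightTriangle C T} (ht : t ∈ rt.dist)
    (h𝒟 : t.obj₂ ∈ 𝒟) {V : C} (δ : t.obj₁ ⟶ V) (hδ : t.mor₃ ≫ T.map δ = 0) :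
    FactorsThru 𝒟 δ := by
  obtain ⟨v, hv⟩ := rt.exists_mor₂_comp_eq (rt.tr3 _ (rt.tr3 _ ht)) (T.map δ) hδ
  have hTδ : T.map t.mor₁ ≫ (-v) = T.map δ := by simpa using hv
  exact rt.factorsThru_of_factorsThru_map h210 hfte δ ⟨_, ⟨t.obj₂, h𝒟, rfl⟩, _, _, hTδ⟩

lemma comp_mor₃_eq_zero_of_factorsThru {𝒟 : Set C} {t : RightTriangle C T} (ht : t ∈ rt.dist)
    (hepi : SEpic 𝒟 t.mor₂) {W : C} {w : W ⟶ t.obj₃} (hw : FactorsThru 𝒟 w) :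
    w ≫ t.mor₃ = 0 := by
  obtain ⟨D, hD, u, v, rfl⟩ := hw
  obtain ⟨v', rfl⟩ := hepi D hD v
  simp [rt.mor₂_comp_mor₃ ht]

lemma exists_comp_mor₃_eq {𝒟 : Set C} {X D Y D' Y' : C} {f : X ⟶ D} {g : D ⟶ Y}
    {h : Y ⟶ T.obj X} {f' : X ⟶ D'} {g' : D' ⟶ Y'} {h' : Y' ⟶ T.obj X}
    (ht : (⟨X, D, Y, f, g, h⟩ : RightTriangle C T) ∈ rt.dist)
    (ht' : (⟨X, D', Y', f', g', h'⟩ : RightTriangle C T) ∈ rt.dist)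
    (hf : SMonic 𝒟 f) (hD' : D' ∈ 𝒟) : ∃ c : Y ⟶ Y', c ≫ h' = h := by
  obtain ⟨φ, hφ⟩ := hf D' hD' f'
  obtain ⟨c, -, hc⟩ := rt.tr4 _ ht _ ht' (𝟙 X) φ (by simpa using hφ)
  exact ⟨c, by simpa using hc.symm⟩

end RightTriangulated

section StableQuotient

lemma FactorsThru.comp_right {C : Type u} [Category.{v} C] {S : Set C} {X Y Z : C}
    {f : X ⟶ Y} (hf : FactorsThru S f) (g : Y ⟶ Z) : FactorsThru S (f ≫ g) := by
  obtain ⟨D, hD, u, v, rfl⟩ := hf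
  exact ⟨D, hD, u, v ≫ g, by simp⟩

lemma FactorsThru.comp_left {C : Type u} [Category.{v} C] {S : Set C} {X Y Z : C}
    (f : X ⟶ Y) {g : Y ⟶ Z} (hg : FactorsThru S g) : FactorsThru S (f ≫ g) := by
  obtain ⟨D, hD, u, v, rfl⟩ := hg
  exact ⟨D, hD, f ≫ u, v, by simp⟩

variable {C : Type u} [Category.{v} C] [Preadditive C] {𝒵 𝒟 : Set C}

lemma FactorsThru.add [HasBinaryBiproducts C] {S : Set C}
    (hS : ∀ {X Y : C}, X ∈ S → Y ∈ S → (X ⊞ Y) ∈ S) {X Y : C} {f g : X ⟶ Y}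
    (hf : FactorsThru S f) (hg : FactorsThru S g) : FactorsThru S (f + g) := by
  obtain ⟨D, hD, u, v, rfl⟩ := hf
  obtain ⟨D', hD', u', v', rfl⟩ := hg
  exact ⟨D ⊞ D', hS hD hD', biprod.lift u u', biprod.desc v v', by simp⟩

lemma stableRel_congruence [HasBinaryBiproducts C]
    (h𝒟 : ∀ {X Y : C}, X ∈ 𝒟 → Y ∈ 𝒟 → (X ⊞ Y) ∈ 𝒟) (hne : 𝒵.Nonempty → 𝒟.Nonempty) :
    Congruence (stableRel 𝒵 𝒟) where
  equivalence {X _} :=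
    { refl := fun f => by
        obtain ⟨D, hD⟩ := hne ⟨X.obj, X.property⟩
        exact ⟨D, hD, 0, 0, by simp⟩
      symm := fun {f g} ⟨D, hD, u, v, huv⟩ => ⟨D, hD, -u, v, by simp [huv]⟩
      trans := fun {f g h} hfg hgh => by
        simpa [stableRel] using FactorsThru.add h𝒟 hfg hgh }
  comp_left f _ _ h := by
    simpa [stableRel, Preadditive.comp_sub] using FactorsThru.comp_left f.hom h
  comp_right g h := by
    simpa [stableRel, Preadditive.sub_comp] using FactorsThru.comp_right h g.hom

variable (𝒟) in
abbrev zquotMap {M N : C} (hM : M ∈ 𝒵) (hN : N ∈ 𝒵) (f : M ⟶ N) :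
    (zquot 𝒵 𝒟).obj ⟨M, hM⟩ ⟶ (zquot 𝒵 𝒟).obj ⟨N, hN⟩ :=
  (zquot 𝒵 𝒟).map (ObjectProperty.homMk f)

lemma zquotMap_eq_of_factorsThru {M N : C} {hM : M ∈ 𝒵} {hN : N ∈ 𝒵} {f g : M ⟶ N}
    (h : FactorsThru 𝒟 (f - g)) : zquotMap 𝒟 hM hN f = zquotMap 𝒟 hM hN g :=
  CategoryTheory.Quotient.sound _ h

lemma factorsThru_of_zquotMap_eq [Congruence (stableRel 𝒵 𝒟)] {M N : C} {hM : M ∈ 𝒵}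
    {hN : N ∈ 𝒵} {f g : M ⟶ N} (h : zquotMap 𝒟 hM hN f = zquotMap 𝒟 hM hN g) :
    FactorsThru 𝒟 (f - g) :=
  (Quotient.functor_map_eq_iff _ _ _).mp h

lemma zquotMap_comp {M N P : C} (hM : M ∈ 𝒵) (hN : N ∈ 𝒵) (hP : P ∈ 𝒵) (f : M ⟶ N)
    (g : N ⟶ P) : zquotMap 𝒟 hM hP (f ≫ g) = zquotMap 𝒟 hM hN f ≫ zquotMap 𝒟 hN hP g :=
  (zquot 𝒵 𝒟).map_comp (X := ⟨M, hM⟩) (Y := ⟨N, hN⟩) (Z := ⟨P, hP⟩)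
    (ObjectProperty.homMk f) (ObjectProperty.homMk g)

lemma zquotMap_id {M : C} (hM : M ∈ 𝒵) : zquotMap 𝒟 hM hM (𝟙 M) = 𝟙 _ :=
  (zquot 𝒵 𝒟).map_id _

lemma zquotMap_surjective {M N : C} (hM : M ∈ 𝒵) (hN : N ∈ 𝒵) :
    Function.Surjective (zquotMap 𝒟 hM hN) := fun φ => by
  obtain ⟨f, hf⟩ := (zquot 𝒵 𝒟).map_surjective (X := ⟨M, hM⟩) (Y := ⟨N, hN⟩) φ
  exact ⟨f.hom, hf⟩

def zquotIsoOfFactorsThru {M N : C} (hM : M ∈ 𝒵) (hN : N ∈ 𝒵) (f : M ⟶ N) (g : N ⟶ M)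
    (hfg : FactorsThru 𝒟 (f ≫ g - 𝟙 M)) (hgf : FactorsThru 𝒟 (g ≫ f - 𝟙 N)) :
    (zquot 𝒵 𝒟).obj ⟨M, hM⟩ ≅ (zquot 𝒵 𝒟).obj ⟨N, hN⟩ where
  hom := zquotMap 𝒟 hM hN f
  inv := zquotMap 𝒟 hN hM g
  hom_inv_id := by rw [← zquotMap_comp, zquotMap_eq_of_factorsThru hfg, zquotMap_id]
  inv_hom_id := by rw [← zquotMap_comp, zquotMap_eq_of_factorsThru hgf, zquotMap_id]

end StableQuotient

section Shift

variable {C : Type u} [Category.{v} C] [Preadditive C] [HasZeroObject C]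
  [HasFiniteBiproducts C] {T : C ⥤ C}

/-- The fixed right triangles `M → D_M → σM → TM` defining the shift `σ` of `𝒵/𝒟`. -/
structure ShiftTriangles (rt : RightTriangulated T) (𝒟 𝒵 : Set C) where
  D : C → C
  σ : C → C
  α : ∀ M : C, M ⟶ D M
  β : ∀ M : C, D M ⟶ σ M
  γ : ∀ M : C, σ M ⟶ T.obj M
  D_mem : ∀ M ∈ 𝒵, D M ∈ 𝒟
  σ_mem : ∀ M ∈ 𝒵, σ M ∈ 𝒵
  mem_dist : ∀ M ∈ 𝒵, (⟨M, D M, σ M, α M, β M, γ M⟩ : RightTriangle C T) ∈ rt.dist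
  sMonic_α : ∀ M ∈ 𝒵, SMonic 𝒟 (α M)
  sEpic_β : ∀ M ∈ 𝒵, SEpic 𝒟 (β M)

namespace ShiftTriangles

variable {rt : RightTriangulated T} {𝒟 𝒵 : Set C} (S : ShiftTriangles rt 𝒟 𝒵)

/-- `F` acts on morphisms as `σ`: through the third component of any morphism of the
fixed triangles. -/
def MapCompatible (F : ZModD 𝒵 𝒟 ⥤ ZModD 𝒵 𝒟)
    (hobj : ∀ (M : C) (hM : M ∈ 𝒵),
      F.obj ((zquot 𝒵 𝒟).obj ⟨M, hM⟩) = (zquot 𝒵 𝒟).obj ⟨S.σ M, S.σ_mem M hM⟩) : Prop :=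
  ∀ (M N : C) (hM : M ∈ 𝒵) (hN : N ∈ 𝒵) (μ : M ⟶ N) (g : S.D M ⟶ S.D N) (μ' : S.σ M ⟶ S.σ N),
    S.α M ≫ g = μ ≫ S.α N → S.β M ≫ μ' = g ≫ S.β N → S.γ M ≫ T.map μ = μ' ≫ S.γ N →
    F.map (zquotMap 𝒟 hM hN μ) =
      eqToHom (hobj M hM) ≫ zquotMap 𝒟 _ _ μ' ≫ eqToHom (hobj N hN).symm

lemma exists_triangle_hom {M N : C} (hM : M ∈ 𝒵) (hN : N ∈ 𝒵) (μ : M ⟶ N) :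
    ∃ (g : S.D M ⟶ S.D N) (μ' : S.σ M ⟶ S.σ N), S.α M ≫ g = μ ≫ S.α N ∧
      S.β M ≫ μ' = g ≫ S.β N ∧ S.γ M ≫ T.map μ = μ' ≫ S.γ N := by
  obtain ⟨g, hg⟩ := S.sMonic_α M hM (S.D N) (S.D_mem N hN) (μ ≫ S.α N)
  obtain ⟨μ', hβ, hγ⟩ := rt.tr4 _ (S.mem_dist M hM) _ (S.mem_dist N hN) μ g hg
  exact ⟨g, μ', hg, hβ, hγ⟩

lemma factorsThru_iff_comp_γ_eq_zero (h210 : Assumption210 rt) (hfte : FactorThroughEpic T 𝒟)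
    {M W : C} (hM : M ∈ 𝒵) (w : W ⟶ S.σ M) : FactorsThru 𝒟 w ↔ w ≫ S.γ M = 0 :=
  ⟨rt.comp_mor₃_eq_zero_of_factorsThru (S.mem_dist M hM) (S.sEpic_β M hM),
    rt.factorsThru_of_comp_mor₃_eq_zero h210 hfte (S.mem_dist M hM) (S.D_mem M hM) w⟩

/-- Any two choices of `μ'` differ by a map killed by `γ_N`, hence factoring through `𝒟`. -/
lemma map_zquotMap (h210 : Assumption210 rt) (hfte : FactorThroughEpic T 𝒟)
    {F : ZModD 𝒵 𝒟 ⥤ ZModD 𝒵 𝒟} {hobj} (hF : S.MapCompatible F hobj) {M N : C}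
    (hM : M ∈ 𝒵) (hN : N ∈ 𝒵) (μ : M ⟶ N) (μ' : S.σ M ⟶ S.σ N)
    (hμ' : S.γ M ≫ T.map μ = μ' ≫ S.γ N) :
    F.map (zquotMap 𝒟 hM hN μ) =
      eqToHom (hobj M hM) ≫ zquotMap 𝒟 _ _ μ' ≫ eqToHom (hobj N hN).symm := by
  obtain ⟨g, μ'', hα, hβ, hγ⟩ := S.exists_triangle_hom hM hN μ
  rw [hF M N hM hN μ g μ'' hα hβ hγ, zquotMap_eq_of_factorsThru]
  rw [S.factorsThru_iff_comp_γ_eq_zero h210 hfte hN, Preadditive.sub_comp, ← hγ, hμ', sub_self]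

lemma exists_γ_comp_eq {M N : C} (hM : M ∈ 𝒵) (hN : N ∈ 𝒵) (ε : S.σ M ⟶ S.σ N) :
    ∃ c : T.obj M ⟶ T.obj N, S.γ M ≫ c = ε ≫ S.γ N := by
  obtain ⟨a, ha⟩ := S.sEpic_β N hN (S.D M) (S.D_mem M hM) (S.β M ≫ ε)
  obtain ⟨c, hc, -⟩ :=
    rt.tr4 _ (rt.tr3 _ (S.mem_dist M hM)) _ (rt.tr3 _ (S.mem_dist N hN)) a ε ha.symm
  exact ⟨c, hc⟩

lemma factorsThru_id_σ (h210 : Assumption210 rt) (hfte : FactorThroughEpic T 𝒟) {M : C}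
    (hM : M ∈ 𝒵) (hM𝒟 : M ∈ 𝒟) : FactorsThru 𝒟 (𝟙 (S.σ M)) := by
  obtain ⟨r, hr⟩ := S.sMonic_α M hM M hM𝒟 (𝟙 M)
  rw [S.factorsThru_iff_comp_γ_eq_zero h210 hfte hM, Category.id_comp]
  exact rt.mor₃_eq_zero_of_retraction (S.mem_dist M hM) r hr

lemma faithful [Congruence (stableRel 𝒵 𝒟)] (h210 : Assumption210 rt)
    (hfte : FactorThroughEpic T 𝒟) {F : ZModD 𝒵 𝒟 ⥤ ZModD 𝒵 𝒟} {hobj}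
    (hF : S.MapCompatible F hobj) : F.Faithful where
  map_injective {X Y} {φ ψ} h := by
    obtain ⟨⟨M, hM⟩⟩ := X
    obtain ⟨⟨N, hN⟩⟩ := Y
    obtain ⟨μ, rfl⟩ := zquotMap_surjective hM hN φ
    obtain ⟨ν, rfl⟩ := zquotMap_surjective hM hN ψ
    obtain ⟨-, μ', -, -, hμ'⟩ := S.exists_triangle_hom hM hN μ
    obtain ⟨-, ν', -, -, hν'⟩ := S.exists_triangle_hom hM hN ν
    rw [S.map_zquotMap h210 hfte hF hM hN μ μ' hμ', S.map_zquotMap h210 hfte hF hM hN ν ν' hν',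
      cancel_epi, cancel_mono] at h
    have hγ : (μ' - ν') ≫ S.γ N = 0 :=
      (S.factorsThru_iff_comp_γ_eq_zero h210 hfte hN _).mp (factorsThru_of_zquotMap_eq h)
    apply zquotMap_eq_of_factorsThru
    apply rt.factorsThru_of_mor₃_comp_map_eq_zero h210 hfte (S.mem_dist M hM) (S.D_mem M hM)
    have := rt.shift_additive
    rw [T.map_sub, Preadditive.comp_sub, hμ', hν', ← Preadditive.sub_comp, hγ]

lemma full (h210 : Assumption210 rt) (hfte : FactorThroughEpic T 𝒟)
    (hTfull : ∀ X ∈ 𝒵, ∀ Y ∈ 𝒵, ∀ g : T.obj X ⟶ T.obj Y, ∃ f : X ⟶ Y, T.map f = g)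
    {F : ZModD 𝒵 𝒟 ⥤ ZModD 𝒵 𝒟} {hobj} (hF : S.MapCompatible F hobj) : F.Full where
  map_surjective {X Y} ω := by
    obtain ⟨⟨M, hM⟩⟩ := X
    obtain ⟨⟨N, hN⟩⟩ := Y
    obtain ⟨ε, hε⟩ := zquotMap_surjective (S.σ_mem M hM) (S.σ_mem N hN)
      (eqToHom (hobj M hM).symm ≫ ω ≫ eqToHom (hobj N hN))
    obtain ⟨c, hc⟩ := S.exists_γ_comp_eq hM hN ε
    obtain ⟨μ, rfl⟩ := hTfull M hM N hN c
    refine ⟨zquotMap 𝒟 hM hN μ, ?_⟩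
    rw [S.map_zquotMap h210 hfte hF hM hN μ ε hc, hε]
    simp

lemma essSurj (h210 : Assumption210 rt) (hfte : FactorThroughEpic T 𝒟)
    (h𝒵 : 𝒵 ⊆ muInvSet rt 𝒵 𝒟) {F : ZModD 𝒵 𝒟 ⥤ ZModD 𝒵 𝒟}
    (hobj : ∀ (M : C) (hM : M ∈ 𝒵),
      F.obj ((zquot 𝒵 𝒟).obj ⟨M, hM⟩) = (zquot 𝒵 𝒟).obj ⟨S.σ M, S.σ_mem M hM⟩) :
    F.EssSurj where
  mem_essImage Y := by
    obtain ⟨⟨M, hM⟩⟩ := Y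
    rcases h𝒵 hM with hM𝒟 | ⟨N, D, f, g, h, ht, hN, hD, hf, -⟩
    · -- both `M` and `σM` are zero objects of `𝒵/𝒟`
      have hσM := S.factorsThru_id_σ h210 hfte hM hM𝒟
      have hidM : FactorsThru 𝒟 (𝟙 M) := ⟨M, hM𝒟, 𝟙 M, 𝟙 M, Category.id_comp _⟩
      refine ⟨_, ⟨eqToIso (hobj M hM) ≪≫ zquotIsoOfFactorsThru _ hM 0 0 ?_ ?_⟩⟩
      · simpa using hσM.comp_right (-𝟙 _)
      · simpa using hidM.comp_right (-𝟙 _)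
    · obtain ⟨c, hc⟩ := rt.exists_comp_mor₃_eq (S.mem_dist N hN) ht (S.sMonic_α N hN) hD
      obtain ⟨c', hc'⟩ := rt.exists_comp_mor₃_eq ht (S.mem_dist N hN) hf (S.D_mem N hN)
      refine ⟨_, ⟨eqToIso (hobj N hN) ≪≫ zquotIsoOfFactorsThru _ hM c c' ?_ ?_⟩⟩
      · exact (S.factorsThru_iff_comp_γ_eq_zero h210 hfte hN _).mpr (by simp [hc, hc'])
      · exact rt.factorsThru_of_comp_mor₃_eq_zero h210 hfte ht hD _ (by simp [hc, hc'])

end ShiftTriangles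

end Shift

theorem sigma_isEquivalence_general {C : Type u} [Category.{v} C] [Preadditive C]
    [HasZeroObject C] [HasFiniteBiproducts C] {T : C ⥤ C} (rt : RightTriangulated T)
    (h210 : Assumption210 rt)
    (𝒟 𝒵 : Set C) (hsub𝒟 : IsSubcat 𝒟)
    (hfte : FactorThroughEpic T 𝒟)
    (hmut : IsMutationPair rt 𝒵 𝒵 𝒟)
    (hTfull : ∀ X ∈ 𝒵, ∀ Y ∈ 𝒵, ∀ g : T.obj X ⟶ T.obj Y, ∃ f : X ⟶ Y, T.map f = g)
    (DM σO : C → C) (α : ∀ M : C, M ⟶ DM M) (β : ∀ M : C, DM M ⟶ σO M)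
    (γ : ∀ M : C, σO M ⟶ T.obj M)
    (hDM : ∀ M ∈ 𝒵, DM M ∈ 𝒟) (hσ : ∀ M ∈ 𝒵, σO M ∈ 𝒵)
    (htri : ∀ M ∈ 𝒵, (⟨M, DM M, σO M, α M, β M, γ M⟩ : RightTriangle C T) ∈ rt.dist)
    (hα : ∀ M ∈ 𝒵, SMonic 𝒟 (α M)) (hβ : ∀ M ∈ 𝒵, SEpic 𝒟 (β M)) :
    ∀ (σfun : ZModD 𝒵 𝒟 ⥤ ZModD 𝒵 𝒟)
      (hobj : ∀ (M : C) (hM : M ∈ 𝒵),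
        σfun.obj ((zquot 𝒵 𝒟).obj ⟨M, hM⟩) = (zquot 𝒵 𝒟).obj ⟨σO M, hσ M hM⟩),
      (∀ (M N : C) (hM : M ∈ 𝒵) (hN : N ∈ 𝒵) (μ : M ⟶ N) (g : DM M ⟶ DM N)
          (μ' : σO M ⟶ σO N),
          α M ≫ g = μ ≫ α N → β M ≫ μ' = g ≫ β N → γ M ≫ T.map μ = μ' ≫ γ N →
          σfun.map ((zquot 𝒵 𝒟).map (ObjectProperty.homMk μ : (⟨M, hM⟩ : ObjectProperty.FullSubcategory (· ∈ 𝒵)) ⟶ ⟨N, hN⟩))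
            = eqToHom (hobj M hM) ≫
              (zquot 𝒵 𝒟).map (ObjectProperty.homMk μ' : (⟨σO M, hσ M hM⟩ : ObjectProperty.FullSubcategory (· ∈ 𝒵)) ⟶ ⟨σO N, hσ N hN⟩)
              ≫ eqToHom (hobj N hN).symm) →
      σfun.IsEquivalence := by
  intro σfun hobj hmap
  let S : ShiftTriangles rt 𝒟 𝒵 := ⟨DM, σO, α, β, γ, hDM, hσ, htri, hα, hβ⟩
  have : Congruence (stableRel 𝒵 𝒟) :=
    stableRel_congruence hsub𝒟.2.1 fun ⟨M, hM⟩ => ⟨DM M, hDM M hM⟩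
  exact { faithful := S.faithful h210 hfte hmap
          full := S.full h210 hfte hTfull hmap
          essSurj := S.essSurj h210 hfte hmut.1.ge hobj }

/-- Theorem 3.11: if `(𝒵, 𝒵)` is a `𝒟`-mutation pair, `𝒟` is factor-through-epic,
`𝒵` is extension-closed and the restriction of the shift `T` to `𝒵` is full, then
the induced shift `σ` on the right triangulated quotient `𝒵/𝒟` is an equivalence,
i.e. `𝒵/𝒟` is a triangulated category. -/
theorem sigma_isEquivalence {C : Type u} [Category.{v} C] [Preadditive C]
    [HasZeroObject C] [HasFiniteBiproducts C] {T : C ⥤ C} (rt : RightTriangulated T)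
    (h210 : Assumption210 rt)
    (𝒟 𝒵 : Set C) (hsub𝒟 : IsSubcat 𝒟) (hsub𝒵 : IsSubcat 𝒵) (h𝒟𝒵 : 𝒟 ⊆ 𝒵)
    (hfte : FactorThroughEpic T 𝒟) (hext : ExtClosed rt 𝒵)
    (hmut : IsMutationPair rt 𝒵 𝒵 𝒟)
    (hTfull : ∀ X ∈ 𝒵, ∀ Y ∈ 𝒵, ∀ g : T.obj X ⟶ T.obj Y, ∃ f : X ⟶ Y, T.map f = g)
    (DM σO : C → C) (α : ∀ M : C, M ⟶ DM M) (β : ∀ M : C, DM M ⟶ σO M)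
    (γ : ∀ M : C, σO M ⟶ T.obj M)
    (hDM : ∀ M ∈ 𝒵, DM M ∈ 𝒟) (hσ : ∀ M ∈ 𝒵, σO M ∈ 𝒵)
    (htri : ∀ M ∈ 𝒵, (⟨M, DM M, σO M, α M, β M, γ M⟩ : RightTriangle C T) ∈ rt.dist)
    (hα : ∀ M ∈ 𝒵, SMonic 𝒟 (α M)) (hβ : ∀ M ∈ 𝒵, SEpic 𝒟 (β M)) :
    ∀ (σfun : ZModD 𝒵 𝒟 ⥤ ZModD 𝒵 𝒟)
      (hobj : ∀ (M : C) (hM : M ∈ 𝒵),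
        σfun.obj ((zquot 𝒵 𝒟).obj ⟨M, hM⟩) = (zquot 𝒵 𝒟).obj ⟨σO M, hσ M hM⟩),
      (∀ (M N : C) (hM : M ∈ 𝒵) (hN : N ∈ 𝒵) (μ : M ⟶ N) (g : DM M ⟶ DM N)
          (μ' : σO M ⟶ σO N),
          α M ≫ g = μ ≫ α N → β M ≫ μ' = g ≫ β N → γ M ≫ T.map μ = μ' ≫ γ N →
          σfun.map ((zquot 𝒵 𝒟).map (ObjectProperty.homMk μ : (⟨M, hM⟩ : ObjectProperty.FullSubcategory (· ∈ 𝒵)) ⟶ ⟨N, hN⟩))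
            = eqToHom (hobj M hM) ≫
              (zquot 𝒵 𝒟).map (ObjectProperty.homMk μ' : (⟨σO M, hσ M hM⟩ : ObjectProperty.FullSubcategory (· ∈ 𝒵)) ⟶ ⟨σO N, hσ N hN⟩)
              ≫ eqToHom (hobj N hN).symm) →
      σfun.IsEquivalence :=
  sigma_isEquivalence_general rt h210 𝒟 𝒵 hsub𝒟 hfte hmut hTfull DM σO α β γ hDM hσ htri hα hβ
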